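/- arXiv:math/0502519 — 2 statements merged into one kernel-verified Lean document; each statement's English description precedes it below -/
import Mathlib

section
/- In the model space (H, d), for every t ∈ (0,∞) and all θ₁, θ₂ ∈ ℝ, the distance satisfies d((t,θ₁),(t,θ₂)) ≥ min( t , t³·|θ₁ − θ₂|/8 ). -/
open Set

/-- The speed at time `s` of a path `γ(s) = (r(s), θ(s))` in the model space
`(H; ds² = dr² + r⁶ dθ²)`, namely `√(r′(s)² + r(s)⁶ θ′(s)²)`. -/
noncomputable def speedWP (γ : ℝ → ℝ × ℝ) (s : ℝ) : ℝ :=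
  Real.sqrt ((deriv γ s).1 ^ 2 + (γ s).1 ^ 6 * (deriv γ s).2 ^ 2)

/-- The length of a path `γ : [0,1] → H` for the metric `ds² = dr² + r⁶ dθ²`. -/
noncomputable def pathLengthWP (γ : ℝ → ℝ × ℝ) : ℝ :=
  ∫ s in (0 : ℝ)..1, speedWP γ s

/-- A path `γ : [0,1] → ℝ²` is piecewise `C¹` if it is continuous on `[0,1]` and there is a
partition `0 = t₀ < t₁ < ⋯ < tₙ = 1` such that `γ` is `C¹` on each subinterval `[tᵢ, tᵢ₊₁]`. -/
def PiecewiseC1 (γ : ℝ → ℝ × ℝ) : Prop :=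
  ContinuousOn γ (Icc 0 1) ∧
    ∃ (n : ℕ) (t : Fin (n + 1) → ℝ), StrictMono t ∧ t 0 = 0 ∧ t (Fin.last n) = 1 ∧
      ∀ i : Fin n, ContDiffOn ℝ 1 γ (Icc (t i.castSucc) (t i.succ))

/-- The distance in the model space `H = (0,∞) × ℝ` with Riemannian metric
`ds² = dr² + r⁶ dθ²` (Yamada's model for the Weil–Petersson metric transverse to a boundary
stratum): the infimum of lengths of piecewise `C¹` paths in `H` joining the two points. -/
noncomputable def Hdist (p q : ℝ × ℝ) : ℝ :=
  sInf {L : ℝ | ∃ γ : ℝ → ℝ × ℝ, PiecewiseC1 γ ∧ γ 0 = p ∧ γ 1 = q ∧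
    (∀ s ∈ Icc (0 : ℝ) 1, 0 < (γ s).1) ∧ L = pathLengthWP γ}

/-!
Let `m` be the minimum of the radial coordinate along a path from `(t, θ₁)` to `(t, θ₂)`. The
speed dominates both `|r′|` and `r³ |θ′|`, so the length is at least `2 (t - m)` (the path has to
descend to `m` and climb back) and at least `m³ |θ₂ - θ₁|`. If `m ≤ t / 2` the first bound gives
`t`, otherwise the second gives `t³ |θ₁ - θ₂| / 8`. Both are the fundamental theorem of calculus
applied off the finitely many break points of the path.
-/

open MeasureTheory

theorem norm_sub_le_integral_of_norm_deriv_le_off_countable {E : Type*} [NormedAddCommGroup E]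
    [NormedSpace ℝ E] [CompleteSpace E] {f : ℝ → E} {B : ℝ → ℝ} {a b : ℝ} {S : Set ℝ}
    (hab : a ≤ b) (hS : S.Countable) (hfc : ContinuousOn f (Icc a b))
    (hfd : ∀ x ∈ Ioo a b \ S, DifferentiableAt ℝ f x)
    (hfB : ∀ x ∈ Ioo a b \ S, ‖deriv f x‖ ≤ B x) (hBi : IntervalIntegrable B volume a b) :
    ‖f b - f a‖ ≤ ∫ x in a..b, B x := by
  have hB : ∀ᵐ x ∂volume.restrict (Ioc a b), ‖deriv f x‖ ≤ B x := by
    rw [← Measure.restrict_congr_set Ioo_ae_eq_Ioc]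
    filter_upwards [ae_restrict_mem measurableSet_Ioo, ae_restrict_of_ae (hS.ae_notMem volume)]
      with x hx hxS
    exact hfB x ⟨hx, hxS⟩
  have hi : IntervalIntegrable (deriv f) volume a b := by
    refine hBi.mono_fun (aestronglyMeasurable_deriv f _) ?_
    rw [uIoc_of_le hab]
    exact hB.mono fun x hx => hx.trans (le_abs_self _)
  rw [← integral_eq_of_hasDerivAt_off_countable_of_le f (deriv f) hab hS hfc
    (fun x hx => (hfd x hx).hasDerivAt) hi]
  exact intervalIntegral.norm_integral_le_of_norm_le hab
    ((ae_restrict_iff' measurableSet_Ioc).1 hB) hBi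

theorem HasDerivAt.fst {𝕜 E F : Type*} [NontriviallyNormedField 𝕜] [NormedAddCommGroup E]
    [NormedSpace 𝕜 E] [NormedAddCommGroup F] [NormedSpace 𝕜 F] {f : 𝕜 → E × F} {f' : E × F}
    {x : 𝕜} (h : HasDerivAt f f' x) : HasDerivAt (fun y => (f y).1) f'.1 x :=
  (ContinuousLinearMap.fst 𝕜 E F).hasFDerivAt.comp_hasDerivAt x h

theorem HasDerivAt.snd {𝕜 E F : Type*} [NontriviallyNormedField 𝕜] [NormedAddCommGroup E]
    [NormedSpace 𝕜 E] [NormedAddCommGroup F] [NormedSpace 𝕜 F] {f : 𝕜 → E × F} {f' : E × F}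
    {x : 𝕜} (h : HasDerivAt f f' x) : HasDerivAt (fun y => (f y).2) f'.2 x :=
  (ContinuousLinearMap.snd 𝕜 E F).hasFDerivAt.comp_hasDerivAt x h

theorem Monotone.iUnion_Ioc_castSucc_succ {α : Type*} [LinearOrder α] {n : ℕ}
    {t : Fin (n + 1) → α} (ht : Monotone t) :
    ⋃ i : Fin n, Ioc (t i.castSucc) (t i.succ) = Ioc (t 0) (t (Fin.last n)) := by
  rw [← ht.biUnion_Ico_Ioc_map_succ 0 (Fin.last n)]
  ext x
  simp only [mem_iUnion, mem_Ico, Fin.zero_le, true_and, exists_prop]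
  constructor
  · rintro ⟨i, hx⟩
    exact ⟨i.castSucc, Fin.castSucc_lt_last i, by rwa [Fin.orderSucc_castSucc]⟩
  · rintro ⟨i, hi, hx⟩
    obtain ⟨j, rfl⟩ := Fin.exists_castSucc_eq.2 hi.ne
    exact ⟨j, by rwa [Fin.orderSucc_castSucc] at hx⟩

theorem abs_fst_deriv_le_speedWP (γ : ℝ → ℝ × ℝ) (s : ℝ) : |(deriv γ s).1| ≤ speedWP γ s :=
  Real.abs_le_sqrt (le_add_of_nonneg_right (by positivity))

theorem pow_three_mul_abs_snd_deriv_le_speedWP {γ : ℝ → ℝ × ℝ} {s m : ℝ} (hm : 0 ≤ m)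
    (hmr : m ≤ (γ s).1) : m ^ 3 * |(deriv γ s).2| ≤ speedWP γ s := by
  rw [← abs_of_nonneg (pow_nonneg hm 3), ← abs_mul]
  apply Real.abs_le_sqrt
  calc (m ^ 3 * (deriv γ s).2) ^ 2 = m ^ 6 * (deriv γ s).2 ^ 2 := by ring
    _ ≤ (γ s).1 ^ 6 * (deriv γ s).2 ^ 2 := by gcongr
    _ ≤ _ := le_add_of_nonneg_left (by positivity)

theorem ContDiff.piecewiseC1 {γ : ℝ → ℝ × ℝ} (h : ContDiff ℝ 1 γ) : PiecewiseC1 γ :=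
  ⟨h.continuous.continuousOn, 1, ![0, 1], Fin.strictMono_iff_lt_succ.2 (by simp), rfl, rfl,
    fun _ => h.contDiffOn⟩

namespace PiecewiseC1

variable {γ : ℝ → ℝ × ℝ}

theorem exists_finite_differentiableAt (hγ : PiecewiseC1 γ) :
    ∃ S : Set ℝ, S.Finite ∧ ∀ x ∈ Ioo 0 1 \ S, DifferentiableAt ℝ γ x := by
  obtain ⟨-, n, t, ht, ht0, ht1, hC1⟩ := hγ
  refine ⟨range t, finite_range t, fun x ⟨hx, hxt⟩ => ?_⟩
  have hx' : x ∈ Ioc (t 0) (t (Fin.last n)) := by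
    rw [ht0, ht1]
    exact Ioo_subset_Ioc_self hx
  rw [← ht.monotone.iUnion_Ioc_castSucc_succ, mem_iUnion] at hx'
  obtain ⟨i, hlo, hhi⟩ := hx'
  have hhi' : x < t i.succ := hhi.lt_of_ne fun h => hxt ⟨_, h.symm⟩
  exact ((hC1 i).differentiableOn one_ne_zero x ⟨hlo.le, hhi'.le⟩).differentiableAt
    (Icc_mem_nhds hlo hhi')

theorem intervalIntegrable_comp_deriv (hγ : PiecewiseC1 γ) {G : ℝ × ℝ → ℝ × ℝ → ℝ}
    (hG : Continuous (Function.uncurry G)) :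
    IntervalIntegrable (fun s => G (γ s) (deriv γ s)) volume 0 1 := by
  obtain ⟨hcont, n, t, ht, ht0, ht1, hC1⟩ := hγ
  have hpieces : Ioc (0 : ℝ) 1 = ⋃ i : Fin n, Ioc (t i.castSucc) (t i.succ) := by
    rw [ht.monotone.iUnion_Ioc_castSucc_succ, ht0, ht1]
  rw [intervalIntegrable_iff_integrableOn_Ioc_of_le zero_le_one, hpieces,
    integrableOn_finite_iUnion]
  intro i
  have hlt : t i.castSucc < t i.succ := ht Fin.castSucc_lt_succ
  have hsub : Icc (t i.castSucc) (t i.succ) ⊆ Icc 0 1 :=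
    Icc_subset_Icc (ht0 ▸ ht.monotone (Fin.zero_le _)) (ht1 ▸ ht.monotone (Fin.le_last _))
  -- inside the piece `deriv γ = D`, and `D` is continuous up to the endpoints
  set D := derivWithin γ (Icc (t i.castSucc) (t i.succ))
  have hD : ContinuousOn (fun s => G (γ s) (D s)) (Icc (t i.castSucc) (t i.succ)) :=
    hG.comp_continuousOn ((hcont.mono hsub).prodMk
      ((hC1 i).continuousOn_derivWithin (uniqueDiffOn_Icc hlt) le_rfl))
  rw [integrableOn_Ioc_iff_integrableOn_Ioo]
  refine (hD.integrableOn_Icc.mono_set Ioo_subset_Icc_self).congr_fun (fun s hs => ?_)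
    measurableSet_Ioo
  simp only [D, derivWithin_of_mem_nhds (Icc_mem_nhds hs.1 hs.2)]

theorem intervalIntegrable_speedWP (hγ : PiecewiseC1 γ) :
    IntervalIntegrable (speedWP γ) volume 0 1 :=
  hγ.intervalIntegrable_comp_deriv (G := fun p v => √(v.1 ^ 2 + p.1 ^ 6 * v.2 ^ 2))
    (by fun_prop)

theorem abs_fst_sub_le_integral_speedWP (hγ : PiecewiseC1 γ) {c d : ℝ} (hc : 0 ≤ c)
    (hcd : c ≤ d) (hd : d ≤ 1) : |(γ d).1 - (γ c).1| ≤ ∫ s in c..d, speedWP γ s := by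
  obtain ⟨S, hS, hdiff⟩ := hγ.exists_finite_differentiableAt
  have hsub : Ioo c d \ S ⊆ Ioo 0 1 \ S := sdiff_subset_sdiff_left (Ioo_subset_Ioo hc hd)
  have := norm_sub_le_integral_of_norm_deriv_le_off_countable (f := fun s => (γ s).1) hcd
    hS.countable (continuous_fst.comp_continuousOn (hγ.1.mono (Icc_subset_Icc hc hd)))
    (fun x hx => (hdiff x (hsub hx)).fst)
    (fun x hx => by
      rw [(hdiff x (hsub hx)).hasDerivAt.fst.deriv]
      exact abs_fst_deriv_le_speedWP γ x)
    (hγ.intervalIntegrable_speedWP.mono_set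
      (uIcc_subset_uIcc (mem_uIcc_of_le hc (hcd.trans hd)) (mem_uIcc_of_le (hc.trans hcd) hd)))
  rwa [Real.norm_eq_abs] at this

theorem abs_fst_sub_add_abs_fst_sub_le_pathLengthWP (hγ : PiecewiseC1 γ) {s : ℝ}
    (hs : s ∈ Icc 0 1) : |(γ s).1 - (γ 0).1| + |(γ 1).1 - (γ s).1| ≤ pathLengthWP γ := by
  have hi := hγ.intervalIntegrable_speedWP
  rw [pathLengthWP, ← intervalIntegral.integral_add_adjacent_intervals
    (hi.mono_set (uIcc_subset_uIcc left_mem_uIcc (mem_uIcc_of_le hs.1 hs.2)))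
    (hi.mono_set (uIcc_subset_uIcc (mem_uIcc_of_le hs.1 hs.2) right_mem_uIcc))]
  exact add_le_add (hγ.abs_fst_sub_le_integral_speedWP le_rfl hs.1 hs.2)
    (hγ.abs_fst_sub_le_integral_speedWP hs.1 hs.2 le_rfl)

theorem pow_three_mul_abs_snd_sub_le_pathLengthWP (hγ : PiecewiseC1 γ) {m : ℝ} (hm : 0 ≤ m)
    (hmr : ∀ s ∈ Icc (0 : ℝ) 1, m ≤ (γ s).1) :
    m ^ 3 * |(γ 1).2 - (γ 0).2| ≤ pathLengthWP γ := by
  obtain ⟨S, hS, hdiff⟩ := hγ.exists_finite_differentiableAt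
  have := norm_sub_le_integral_of_norm_deriv_le_off_countable (f := fun s => m ^ 3 * (γ s).2)
    zero_le_one hS.countable
    (continuousOn_const.mul (continuous_snd.comp_continuousOn hγ.1))
    (fun x hx => (differentiableAt_const _).mul (hdiff x hx).snd)
    (fun x hx => by
      rw [((hdiff x hx).hasDerivAt.snd.const_mul (m ^ 3)).deriv, Real.norm_eq_abs, abs_mul,
        abs_of_nonneg (pow_nonneg hm 3)]
      exact pow_three_mul_abs_snd_deriv_le_speedWP hm (hmr x (Ioo_subset_Icc_self hx.1)))
    hγ.intervalIntegrable_speedWP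
  rwa [← mul_sub, Real.norm_eq_abs, abs_mul, abs_of_nonneg (pow_nonneg hm 3)] at this

theorem min_le_pathLengthWP (hγ : PiecewiseC1 γ) {t θ₁ θ₂ : ℝ} (ht : 0 < t)
    (h0 : γ 0 = (t, θ₁)) (h1 : γ 1 = (t, θ₂)) :
    min t (t ^ 3 * |θ₁ - θ₂| / 8) ≤ pathLengthWP γ := by
  obtain ⟨s₀, hs₀, hmin⟩ := isCompact_Icc.exists_isMinOn (nonempty_Icc.2 zero_le_one)
    (continuous_fst.comp_continuousOn hγ.1)
  rcases le_or_gt (γ s₀).1 (t / 2) with hlow | hhigh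
  · have hdip := hγ.abs_fst_sub_add_abs_fst_sub_le_pathLengthWP hs₀
    rw [h0, h1, abs_sub_comm] at hdip
    calc min t (t ^ 3 * |θ₁ - θ₂| / 8) ≤ t := min_le_left _ _
      _ ≤ |t - (γ s₀).1| + |t - (γ s₀).1| := by rw [abs_of_nonneg (by linarith)]; linarith
      _ ≤ pathLengthWP γ := hdip
  · have hturn := hγ.pow_three_mul_abs_snd_sub_le_pathLengthWP (by positivity : 0 ≤ t / 2)
      fun s hs => hhigh.le.trans (hmin hs)
    rw [h0, h1] at hturn
    calc min t (t ^ 3 * |θ₁ - θ₂| / 8) ≤ t ^ 3 * |θ₁ - θ₂| / 8 := min_le_right _ _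
      _ = (t / 2) ^ 3 * |θ₂ - θ₁| := by rw [abs_sub_comm]; ring
      _ ≤ pathLengthWP γ := hturn

end PiecewiseC1

/-- In the model space `(H, d)`, for `t > 0` and `θ₁, θ₂ ∈ ℝ`,
`d((t,θ₁),(t,θ₂)) ≥ min(t, t³ |θ₁ − θ₂| / 8)`. -/
theorem Hdist_circular_lower (t θ₁ θ₂ : ℝ) (ht : 0 < t) :
    min t (t ^ 3 * |θ₁ - θ₂| / 8) ≤ Hdist (t, θ₁) (t, θ₂) := by
  refine le_csInf ⟨_, fun s => (t, θ₁ + s * (θ₂ - θ₁)), ContDiff.piecewiseC1 (by fun_prop),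
    by simp, by simp, fun _ _ => ht, rfl⟩ ?_
  rintro L ⟨γ, hγ, h0, h1, -, rfl⟩
  exact hγ.min_le_pathLengthWP ht h0 h1
end

section
/- In the model space (H, d), for all θ₁, θ₂ ∈ ℝ, the limit as t → 0⁺ of (1/(2t))·d((t,θ₁),(t,θ₂)) equals 0. Consequently the Alexandrov angle between the unit-speed radial geodesics t ↦ (t,θ₁) and t ↦ (t,θ₂), emanating from their common limit point at r = 0, is zero. -/
/-! The arc `s ↦ (t, θ₁ + s (θ₂ - θ₁))` of the circle `r = t` joins `(t, θ₁)` to `(t, θ₂)` and has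
constant speed `t³ |θ₂ - θ₁|`, so `d((t, θ₁), (t, θ₂)) ≤ t³ |θ₂ - θ₁| = o(t)` as `t → 0⁺`. -/

open Set

open Filter Topology

lemma pathLengthWP_nonneg (γ : ℝ → ℝ × ℝ) : 0 ≤ pathLengthWP γ :=
  intervalIntegral.integral_nonneg zero_le_one fun _ _ => Real.sqrt_nonneg _

lemma Hdist_nonneg (p q : ℝ × ℝ) : 0 ≤ Hdist p q :=
  Real.sInf_nonneg <| by
    rintro L ⟨γ, -, -, -, -, rfl⟩
    exact pathLengthWP_nonneg γ

lemma Hdist_le_pathLengthWP {γ : ℝ → ℝ × ℝ} (hγ : PiecewiseC1 γ)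
    (hpos : ∀ s ∈ Icc (0 : ℝ) 1, 0 < (γ s).1) : Hdist (γ 0) (γ 1) ≤ pathLengthWP γ := by
  refine csInf_le ⟨0, ?_⟩ ⟨γ, hγ, rfl, rfl, hpos, rfl⟩
  rintro L ⟨δ, -, -, -, -, rfl⟩
  exact pathLengthWP_nonneg δ

lemma PiecewiseC1.of_contDiff {γ : ℝ → ℝ × ℝ} (hγ : ContDiff ℝ 1 γ) : PiecewiseC1 γ :=
  ⟨hγ.continuous.continuousOn, 1, ![0, 1], fun i j hij => by
    fin_cases i <;> fin_cases j <;> simp_all, rfl, rfl, fun _ => hγ.contDiffOn⟩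

def circleArc (r θ₁ θ₂ : ℝ) (s : ℝ) : ℝ × ℝ := (r, θ₁ + s * (θ₂ - θ₁))

lemma hasDerivAt_circleArc (r θ₁ θ₂ s : ℝ) :
    HasDerivAt (circleArc r θ₁ θ₂) (0, θ₂ - θ₁) s :=
  (hasDerivAt_const s r).prodMk <| by
    simpa using ((hasDerivAt_id s).mul_const (θ₂ - θ₁)).const_add θ₁

lemma contDiff_circleArc (r θ₁ θ₂ : ℝ) : ContDiff ℝ 1 (circleArc r θ₁ θ₂) :=
  contDiff_const.prodMk (contDiff_const.add (contDiff_id.mul contDiff_const))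

lemma speedWP_circleArc {r : ℝ} (hr : 0 ≤ r) (θ₁ θ₂ s : ℝ) :
    speedWP (circleArc r θ₁ θ₂) s = r ^ 3 * |θ₂ - θ₁| := by
  rw [speedWP, (hasDerivAt_circleArc r θ₁ θ₂ s).deriv,
    ← Real.sqrt_sq (by positivity : 0 ≤ r ^ 3 * |θ₂ - θ₁|)]
  congr 1
  simp only [circleArc, mul_pow, sq_abs]
  ring

lemma pathLengthWP_circleArc {r : ℝ} (hr : 0 ≤ r) (θ₁ θ₂ : ℝ) :
    pathLengthWP (circleArc r θ₁ θ₂) = r ^ 3 * |θ₂ - θ₁| := by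
  simp [pathLengthWP, speedWP_circleArc hr]

lemma Hdist_same_radius_le {r : ℝ} (hr : 0 < r) (θ₁ θ₂ : ℝ) :
    Hdist (r, θ₁) (r, θ₂) ≤ r ^ 3 * |θ₂ - θ₁| := by
  have h := Hdist_le_pathLengthWP (PiecewiseC1.of_contDiff (contDiff_circleArc r θ₁ θ₂))
    fun _ _ => hr
  simpa [circleArc, pathLengthWP_circleArc hr.le] using h

/-- In the model space `(H, d)`, for all `θ₁, θ₂ ∈ ℝ` the limit as `t → 0⁺` of
`(1/(2t)) · d((t,θ₁),(t,θ₂))` is `0`; hence the Alexandrov angle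
`∠(α,β) = lim_{t→0} (1/(2t)) d(α(t),β(t))` between the unit-speed radial geodesics
`α : t ↦ (t,θ₁)` and `β : t ↦ (t,θ₂)`, emanating from their common limit point at
`r = 0`, is zero. -/
theorem alexandrov_angle_zero (θ₁ θ₂ : ℝ) :
    Filter.Tendsto (fun t : ℝ => 1 / (2 * t) * Hdist (t, θ₁) (t, θ₂))
      (nhdsWithin 0 (Set.Ioi 0)) (nhds 0) := by
  have hlower : ∀ t ∈ Ioi (0 : ℝ), 0 ≤ 1 / (2 * t) * Hdist (t, θ₁) (t, θ₂) :=
    fun t ht => mul_nonneg (by positivity [mem_Ioi.mp ht]) (Hdist_nonneg _ _)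
  have hupper : ∀ t ∈ Ioi (0 : ℝ),
      1 / (2 * t) * Hdist (t, θ₁) (t, θ₂) ≤ t ^ 2 * |θ₂ - θ₁| / 2 := by
    intro t ht
    have ht : 0 < t := ht
    calc 1 / (2 * t) * Hdist (t, θ₁) (t, θ₂)
        ≤ 1 / (2 * t) * (t ^ 3 * |θ₂ - θ₁|) := by
          gcongr
          exact Hdist_same_radius_le ht θ₁ θ₂
      _ = t ^ 2 * |θ₂ - θ₁| / 2 := by field_simp
  have hbound : Tendsto (fun t : ℝ => t ^ 2 * |θ₂ - θ₁| / 2) (𝓝[>] 0) (𝓝 0) := by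
    have h : Continuous fun t : ℝ => t ^ 2 * |θ₂ - θ₁| / 2 := by fun_prop
    simpa using h.tendsto' 0 _ (by simp) |>.mono_left nhdsWithin_le_nhds
  exact squeeze_zero' (eventually_mem_nhdsWithin.mono hlower)
    (eventually_mem_nhdsWithin.mono hupper) hbound
end
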